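/- arXiv:2001.07188 — 4 statements merged into one kernel-verified Lean document; each statement's English description precedes it below -/
import Mathlib

section
/- Let α > 0 and λ₁ > 0, and let a, b, g be positive reals and k > 0 (for a nonzero u in a real Hilbert space, a = ‖Δu‖², b = ‖u‖², g = ‖∇u‖²). If 0 ≥ α a − 2αk²√(a b) + k⁴(α+1) b − k² g and λ₁ g ≤ a, then k² ≥ λ₁ α/(α+1). -/
/-- arithmetic core of the first Faber–Krahn bound.  If `a, b, g, k, α, λ₁`
are positive reals with `λ₁ g ≤ a` and
`0 ≥ α a − 2αk²√(ab) + k⁴(α+1)b − k²g`, then `k² ≥ λ₁ α/(α+1)`.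
(In the application `a = ‖Δu‖²`, `b = ‖u‖²`, `g = ‖∇u‖²` for a nonzero eigenfunction.) -/
theorem faber_krahn_arith_core (a b g k α lam1 : ℝ)
    (ha : 0 < a) (hb : 0 < b) (hg : 0 < g) (hk : 0 < k) (hα : 0 < α) (hlam1 : 0 < lam1)
    (hpoin : lam1 * g ≤ a)
    (hineq : 0 ≥ α * a - 2 * α * k ^ 2 * Real.sqrt (a * b) + k ^ 4 * (α + 1) * b
      - k ^ 2 * g) :
    lam1 * α / (α + 1) ≤ k ^ 2 := by
  set s := Real.sqrt (a * b) with hs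
  have hs2 : s ^ 2 = a * b := Real.sq_sqrt (by positivity)
  have hs0 : 0 ≤ s := Real.sqrt_nonneg _
  -- Young: 2αk²s ≤ (α²/(α+1))a + (α+1)k⁴b
  have hyoung : 2 * α * k ^ 2 * s * (α + 1) ≤ α ^ 2 * a + (α + 1) ^ 2 * k ^ 4 * b := by
    have hsab : s = Real.sqrt a * Real.sqrt b := Real.sqrt_mul ha.le b
    have hxa : Real.sqrt a ^ 2 = a := Real.sq_sqrt ha.le
    have hxb : Real.sqrt b ^ 2 = b := Real.sq_sqrt hb.le
    have h2 : ∀ x y : ℝ, 2 * α * k ^ 2 * (x * y) * (α + 1)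
        ≤ α ^ 2 * x ^ 2 + (α + 1) ^ 2 * k ^ 4 * y ^ 2 := fun x y => by
      nlinarith [sq_nonneg (α * x - (α + 1) * k ^ 2 * y)]
    have := h2 (Real.sqrt a) (Real.sqrt b)
    rw [hxa, hxb] at this
    rw [hsab]
    linarith
  -- hence k² g (α+1) ≥ α a
  have hkey : α * a ≤ k ^ 2 * g * (α + 1) := by
    nlinarith [mul_pos hα ha]
  have : lam1 * α * g ≤ k ^ 2 * g * (α + 1) := by nlinarith [mul_le_mul_of_nonneg_left hpoin hα.le]
  rw [div_le_iff₀ (by positivity)]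
  nlinarith [mul_pos hg hlam1]
end

section
/- If a bounded sesquilinear form a(·,·) on a Hilbert space X is T-coercive, i.e., there exists an isomorphism T : X → X and c > 0 such that |a(u, Tu)| ≥ c‖u‖² for all u ∈ X, then the bounded operator A : X → X representing a via a(u,φ) = (Au, φ)_X is continuously invertible. -/
open scoped InnerProductSpace NNReal

namespace ContinuousLinearMap

variable {𝕜 E : Type*} [RCLike 𝕜] [NormedAddCommGroup E] [InnerProductSpace 𝕜 E] [CompleteSpace E]

/-- Since `⟪f x, T x⟫ = ⟪T† f x, x⟫`, `T`-coercivity of `f` is coercivity of `T† ∘L f`, which is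
then invertible by Lax–Milgram; so is `T†`, hence so is `f`. -/
theorem isUnit_of_isUnit_of_forall_le_norm_inner_map_apply (f T : E →L[𝕜] E) (hT : IsUnit T)
    {c : ℝ≥0} (hc : 0 < c) (h : ∀ x, ‖x‖ ^ 2 * c ≤ ‖⟪f x, T x⟫_𝕜‖) : IsUnit f := by
  have hTf : IsUnit (adjoint T * f) :=
    isUnit_of_forall_le_norm_inner_map (adjoint T ∘L f) hc fun x ↦ by
      simpa only [comp_apply, adjoint_inner_left] using h x
  obtain ⟨u, hu⟩ := hT.star
  rwa [← star_eq_adjoint, ← hu, Units.isUnit_units_mul] at hTf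

end ContinuousLinearMap

/-- if a bounded sesquilinear form `a` on a complex Hilbert space `X` is
`T`-coercive (there is an isomorphism `T : X → X` and `c > 0` with `|a(u,Tu)| ≥ c‖u‖²`),
then the bounded operator `A` representing `a` via `a(u,φ) = (Au,φ)_X` is continuously
invertible. -/
theorem T_coercive_implies_invertible
    {X : Type*} [NormedAddCommGroup X] [InnerProductSpace ℂ X] [CompleteSpace X]
    (a : X → X → ℂ) (A : X →L[ℂ] X)
    (hrep : ∀ u φ : X, a u φ = ⟪A u, φ⟫_ℂ)
    (T : X ≃L[ℂ] X) (c : ℝ) (hc : 0 < c)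
    (hcoer : ∀ u : X, c * ‖u‖ ^ 2 ≤ ‖a u (T u)‖) :
    ∃ e : X ≃L[ℂ] X, (e : X →L[ℂ] X) = A := by
  have hT : IsUnit (T : X →L[ℂ] X) := ((ContinuousLinearEquiv.unitsEquiv ℂ X).symm T).isUnit
  obtain ⟨u, rfl⟩ := A.isUnit_of_isUnit_of_forall_le_norm_inner_map_apply T hT
    (c := ⟨c, hc.le⟩) hc fun x ↦ by rw [← hrep, mul_comm]; exact hcoer x
  exact ⟨ContinuousLinearEquiv.unitsEquiv ℂ X u, rfl⟩
end

section
/- With T defined by ΔTφ = (n−1)Δφ on X(D) and a(u,φ) = ∫_D (1/(n−1)) Δu Δφ̄ dx, one has a(u, Tu) = ‖Δu‖²_{L²(D)} for all u ∈ X(D); in particular a is T-coercive on X(D). -/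
open MeasureTheory Filter Topology
open scoped RealInnerProductSpace

noncomputable section

/-- Componentwise Laplacian via iterated Fréchet derivatives. -/
noncomputable def lap {d : ℕ} {F : Type*} [NormedAddCommGroup F] [NormedSpace ℝ F]
    (u : EuclideanSpace ℝ (Fin d) → F) (x : EuclideanSpace ℝ (Fin d)) : F :=
  ∑ i, fderiv ℝ (fun y => fderiv ℝ u y (EuclideanSpace.single i 1)) x (EuclideanSpace.single i 1)

/-- Partial derivative in direction `i`. -/
noncomputable def pd {d : ℕ} {F : Type*} [NormedAddCommGroup F] [NormedSpace ℝ F]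
    (i : Fin d) (u : EuclideanSpace ℝ (Fin d) → F) (x : EuclideanSpace ℝ (Fin d)) : F :=
  fderiv ℝ u x (EuclideanSpace.single i 1)

/-- Normal derivative with respect to the (outward unit normal) field `ν`. -/
noncomputable def nder {d : ℕ} {F : Type*} [NormedAddCommGroup F] [NormedSpace ℝ F]
    (ν : EuclideanSpace ℝ (Fin d) → EuclideanSpace ℝ (Fin d))
    (u : EuclideanSpace ℝ (Fin d) → F) (x : EuclideanSpace ℝ (Fin d)) : F :=
  ∑ i, ν x i • pd i u x

/-- Stand-in for `X(D) = H²(D) ∩ H¹₀(D)`: twice differentiable functions vanishing on `∂D`. -/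
def XD {d : ℕ} (D : Set (EuclideanSpace ℝ (Fin d))) (F : Type*) [NormedAddCommGroup F]
    [NormedSpace ℝ F] : Set (EuclideanSpace ℝ (Fin d) → F) :=
  {φ | ContDiff ℝ 2 φ ∧ ∀ x ∈ frontier D, φ x = 0}

/-- with `T` defined by `ΔTφ = (n−1)Δφ` on `X(D)` and
`a(u,φ) = ∫_D (1/(n−1)) Δu Δφ̄ dx`, one has `a(u,Tu) = ‖Δu‖²_{L²(D)}` for all
`u ∈ X(D)`; in particular `a` is `T`-coercive on `X(D)`. -/
theorem a_T_coercive (d : ℕ) (D : Set (EuclideanSpace ℝ (Fin d)))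
    (hDo : IsOpen D) (hDb : Bornology.IsBounded D)
    (n : EuclideanSpace ℝ (Fin d) → ℝ) (c : ℝ) (hc : 0 < c)
    (hn : ∀ x ∈ D, c ≤ |n x - 1|)
    (T : (EuclideanSpace ℝ (Fin d) → ℝ) → (EuclideanSpace ℝ (Fin d) → ℝ))
    (hT : ∀ φ ∈ XD D ℝ, T φ ∈ XD D ℝ ∧ ∀ x ∈ D, lap (T φ) x = (n x - 1) * lap φ x) :
    ∀ u ∈ XD D ℝ,
      (∫ x in D, (1 / (n x - 1)) * lap u x * lap (T u) x) = ∫ x in D, (lap u x) ^ 2 := by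
  intro u hu
  refine setIntegral_congr_fun hDo.measurableSet (fun x hx => ?_)
  have hne : n x - 1 ≠ 0 := by
    intro h
    have := hn x hx
    rw [h] at this
    simp at this
    linarith
  rw [(hT u hu).2 x hx]
  field_simp

end
end

section
/- Abstract analytic Fredholm discreteness: Let X be a Hilbert space, A : X → X bounded and invertible, and k ↦ B_k an analytic family of compact operators on X defined for k ∈ ℂ with B_0 = 0. Then the set {k ∈ ℂ : A + B_k is not injective} is at most discrete (has no accumulation points). -/
/-!
Write `A + B k = A (1 + C k)` with `C k = A⁻¹ B k`. Near any `z`, approximate the compact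
operator `C z` by a finite-rank `F` with `‖C z - F‖ < 1`; then `G k = 1 + C k - F` is invertible
near `z` and `1 + C k = (1 + F G k⁻¹) G k`. Since `F` factors through a finite-dimensional `V`,
injectivity of `1 + F G k⁻¹` is equivalent to the nonvanishing of an analytic determinant on `V`.
So near each point the operators `1 + C k` are either non-injective throughout, or injective on a
punctured neighbourhood. The first alternative describes an open set, which by this dichotomy is
also closed, and it misses `0` because `C 0 = 0`; since `ℂ` is connected, it is empty.
-/

open Filter Function Topology

theorem PreconnectedSpace.eventually_nhdsNE_of_local_dichotomy {α : Type*} [TopologicalSpace α]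
    [PreconnectedSpace α] {p : α → Prop}
    (h : ∀ z, (∀ᶠ x in 𝓝 z, ¬ p x) ∨ ∀ᶠ x in 𝓝[≠] z, p x) {x₀ : α} (hx₀ : p x₀) (z : α) :
    ∀ᶠ x in 𝓝[≠] z, p x := by
  set E := {w | ∀ᶠ x in 𝓝 w, ¬ p x}
  have hE : IsClopen E := by
    refine ⟨isOpen_compl_iff.mp <| isOpen_iff_mem_nhds.mpr fun w hw => ?_,
      isOpen_setOfPred_eventually_nhds⟩
    have hw' : ∀ᶠ y in 𝓝 w, ∀ᶠ x in 𝓝 y, x ≠ w → p x :=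
      (eventually_nhdsWithin_iff.mp ((h w).resolve_left hw)).eventually_nhds
    filter_upwards [hw'] with y hy hyE
    have hyw : y = w :=
      ((hy.and hyE).mono fun x hx => not_not.mp fun hxw => hx.2 (hx.1 hxw)).self_of_nhds
    exact hw (hyw ▸ hyE)
  have hE_empty : E = ∅ := (isClopen_iff.mp hE).resolve_right fun hE_univ =>
    (hE_univ ▸ Set.mem_univ x₀ : x₀ ∈ E).self_of_nhds hx₀
  exact (h z).resolve_left (Set.eq_empty_iff_forall_notMem.mp hE_empty z)

section

variable {K M N : Type*} [Field K] [AddCommGroup M] [Module K M] [AddCommGroup N] [Module K N]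

theorem LinearMap.injective_one_add_comp_of_swap {a : N →ₗ[K] M} {b : M →ₗ[K] N}
    (h : Injective ⇑(1 + b ∘ₗ a)) : Injective ⇑(1 + a ∘ₗ b) := by
  refine (injective_iff_map_eq_zero _).mpr fun x hx => ?_
  have hx' : x = -a (b x) := eq_neg_of_add_eq_zero_left hx
  have hbx : b x = 0 := (injective_iff_map_eq_zero _).mp h _ <| by
    calc b x + b (a (b x)) = b (x + a (b x)) := (map_add b _ _).symm
      _ = 0 := by rw [show x + a (b x) = 0 from hx, map_zero]
  rw [hx', hbx, map_zero, neg_zero]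

theorem LinearMap.injective_one_add_comp_iff_det_ne_zero [FiniteDimensional K N]
    (a : N →ₗ[K] M) (b : M →ₗ[K] N) :
    Injective ⇑(1 + a ∘ₗ b) ↔ LinearMap.det (1 + b ∘ₗ a) ≠ 0 := by
  rw [← isUnit_iff_ne_zero, ← LinearMap.isUnit_iff_isUnit_det, LinearMap.isUnit_iff_ker_eq_bot,
    LinearMap.ker_eq_bot]
  exact ⟨injective_one_add_comp_of_swap, injective_one_add_comp_of_swap⟩

end

section

variable {𝕜 : Type*} [RCLike 𝕜]

theorem IsCompactOperator.exists_finiteDimensional_norm_sub_comp_lt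
    {E F : Type*} [NormedAddCommGroup E] [NormedSpace 𝕜 E]
    [NormedAddCommGroup F] [InnerProductSpace 𝕜 F]
    {T : E →L[𝕜] F} (hT : IsCompactOperator T) {ε : ℝ} (hε : 0 < ε) :
    ∃ (V : Submodule 𝕜 F) (K : E →L[𝕜] V), FiniteDimensional 𝕜 V ∧
      ‖T - V.subtypeL ∘L K‖ < ε := by
  obtain ⟨t, ht, hcover⟩ := Metric.totallyBounded_iff.mp
    (hT.isCompact_closure_image_closedBall 1).totallyBounded (ε / 2) (half_pos hε)
  set V := Submodule.span 𝕜 (t : Set F)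
  have : FiniteDimensional 𝕜 V := FiniteDimensional.span_of_finite 𝕜 ht
  refine ⟨V, V.orthogonalProjectionOnto ∘L T, this, ?_⟩
  refine lt_of_le_of_lt (ContinuousLinearMap.opNorm_le_of_unit_norm (half_pos hε).le
    fun x hx => ?_) (half_lt_self hε)
  obtain ⟨y, hyt, hy⟩ := Set.mem_iUnion₂.mp <| hcover <| subset_closure
    ⟨x, by simp [hx], rfl⟩
  calc ‖T x - V.starProjection (T x)‖ = ⨅ v : V, ‖T x - v‖ := V.starProjection_minimal _
    _ ≤ ‖T x - y‖ := ciInf_le ⟨0, Set.forall_mem_range.mpr fun _ => norm_nonneg _⟩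
        (⟨y, Submodule.subset_span hyt⟩ : V)
    _ ≤ ε / 2 := (mem_ball_iff_norm.mp hy).le

theorem AnalyticAt.linearMap_det {E V : Type*} [NormedAddCommGroup E]
    [NormedSpace 𝕜 E] [NormedAddCommGroup V] [NormedSpace 𝕜 V] [FiniteDimensional 𝕜 V]
    {f : E → V →L[𝕜] V} {z : E} (hf : AnalyticAt 𝕜 f z) :
    AnalyticAt 𝕜 (fun k => LinearMap.det (f k : V →ₗ[𝕜] V)) z := by
  let b := Module.finBasis 𝕜 V
  have hentry (i j) : AnalyticAt 𝕜 (fun k => LinearMap.toMatrix b b (f k) i j) z := by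
    have hcoord : Continuous (b.coord i) := LinearMap.continuous_of_finiteDimensional _
    convert (⟨b.coord i, hcoord⟩ ∘L ContinuousLinearMap.apply 𝕜 V (b j)).analyticAt _ |>.comp hf
    simp [LinearMap.toMatrix_apply]
  simp only [← LinearMap.det_toMatrix b, Matrix.det_apply']
  exact Finset.analyticAt_fun_sum _ fun σ _ =>
    analyticAt_const.mul (Finset.analyticAt_fun_prod _ fun i _ => hentry (σ i) i)

variable {E : Type*} [NormedAddCommGroup E] [InnerProductSpace 𝕜 E] [CompleteSpace E]
  {C : 𝕜 → E →L[𝕜] E} {z : 𝕜}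

theorem AnalyticAt.exists_analyticAt_injective_one_add_iff_ne_zero
    (hC : AnalyticAt 𝕜 C z) (hCz : IsCompactOperator (C z)) :
    ∃ d : 𝕜 → 𝕜, AnalyticAt 𝕜 d z ∧ ∀ᶠ k in 𝓝 z, (Injective ⇑(1 + C k) ↔ d k ≠ 0) := by
  obtain ⟨V, K, hV, hCK⟩ := hCz.exists_finiteDimensional_norm_sub_comp_lt one_pos
  set F := V.subtypeL ∘L K
  set G : 𝕜 → E →L[𝕜] E := fun k => 1 - (F - C k)
  have hG : AnalyticAt 𝕜 G z := analyticAt_const.sub (analyticAt_const.sub hC)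
  have hGz : IsUnit (G z) := isUnit_one_sub_of_norm_lt_one (by rwa [norm_sub_rev])
  have hG_unit : ∀ᶠ k in 𝓝 z, IsUnit (G k) :=
    hG.continuousAt.eventually_mem (Units.isOpen.mem_nhds hGz)
  set L : 𝕜 → E →L[𝕜] V := fun k => K ∘L Ring.inverse (G k)
  have hL : AnalyticAt 𝕜 L z := by
    have hinv : AnalyticAt 𝕜 Ring.inverse (G z) := by
      simpa using analyticAt_inverse (𝕜 := 𝕜) hGz.unit
    exact (ContinuousLinearMap.compL 𝕜 E E V K).analyticAt _ |>.comp (hinv.comp hG)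
  have hLV : AnalyticAt 𝕜 (fun k => 1 + L k ∘L V.subtypeL) z :=
    analyticAt_const.add ((ContinuousLinearMap.compL 𝕜 V E V).flip V.subtypeL |>.analyticAt _
      |>.comp hL)
  refine ⟨_, hLV.linearMap_det, ?_⟩
  filter_upwards [hG_unit] with k hk
  have hfactor : 1 + C k = (1 + V.subtypeL ∘L L k) * G k := by
    calc 1 + C k = G k + F * 1 := by simp only [G, mul_one]; abel
      _ = G k + F * (Ring.inverse (G k) * G k) := by rw [Ring.inverse_mul_cancel _ hk]
      _ = (1 + V.subtypeL ∘L L k) * G k := by simp only [add_mul, one_mul]; rfl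
  rw [hfactor, ContinuousLinearMap.mul_def, ContinuousLinearMap.coe_comp,
    Injective.of_comp_iff' _ (ContinuousLinearMap.isUnit_iff_bijective.mp hk)]
  exact LinearMap.injective_one_add_comp_iff_det_ne_zero V.subtype (L k : E →ₗ[𝕜] V)

theorem AnalyticAt.eventually_not_injective_one_add_or_eventually_injective
    (hC : AnalyticAt 𝕜 C z) (hCz : IsCompactOperator (C z)) :
    (∀ᶠ k in 𝓝 z, ¬ Injective ⇑(1 + C k)) ∨ ∀ᶠ k in 𝓝[≠] z, Injective ⇑(1 + C k) := by
  obtain ⟨d, hd, hd_iff⟩ := hC.exists_analyticAt_injective_one_add_iff_ne_zero hCz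
  refine hd.eventually_eq_zero_or_eventually_ne_zero.imp (fun hzero => ?_) fun hne => ?_
  · filter_upwards [hzero, hd_iff] with k hk hk_iff
    rwa [hk_iff, not_not]
  · filter_upwards [hne, nhdsWithin_le_nhds hd_iff] with k hk hk_iff
    exact hk_iff.mpr hk

end

/-- abstract analytic Fredholm discreteness.  If `A : X → X` is bounded and
invertible on a Hilbert space `X` and `k ↦ B k` is an analytic family of compact operators
on `X` with `B 0 = 0`, then `{k ∈ ℂ : A + B k is not injective}` has no accumulation
points in `ℂ`. -/
theorem analytic_fredholm_discreteness
    {X : Type*} [NormedAddCommGroup X] [InnerProductSpace ℂ X] [CompleteSpace X]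
    (A : X ≃L[ℂ] X) (B : ℂ → (X →L[ℂ] X))
    (hB_analytic : ∀ k : ℂ, AnalyticAt ℂ B k)
    (hB_compact : ∀ k : ℂ, IsCompactOperator (B k))
    (hB0 : B 0 = 0) :
    ∀ z : ℂ, ¬ AccPt z (Filter.principal
      {k : ℂ | ¬ Function.Injective ((A : X →L[ℂ] X) + B k)}) := by
  intro z hz
  set C : ℂ → X →L[ℂ] X := fun k => (A.symm : X →L[ℂ] X) ∘L B k
  have hA_add (k : ℂ) : ⇑((A : X →L[ℂ] X) + B k) = A ∘ ⇑(1 + C k) := by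
    ext x; simp [C]
  have hC_dichotomy (w : ℂ) :
      (∀ᶠ k in 𝓝 w, ¬ Injective ⇑(1 + C k)) ∨ ∀ᶠ k in 𝓝[≠] w, Injective ⇑(1 + C k) :=
    AnalyticAt.eventually_not_injective_one_add_or_eventually_injective
      (((ContinuousLinearMap.compL ℂ X X X A.symm).analyticAt _).comp (hB_analytic w))
      ((hB_compact w).clm_comp (A.symm : X →L[ℂ] X))
  have hC0 : Injective ⇑(1 + C 0) := by simpa [C, hB0] using injective_id
  obtain ⟨k, hk_inj, hk_not_inj⟩ := (PreconnectedSpace.eventually_nhdsNE_of_local_dichotomy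
    hC_dichotomy hC0 z |>.and_frequently (accPt_iff_frequently_nhdsNE.mp hz)).exists
  exact hk_not_inj (by rw [hA_add]; exact A.injective.comp hk_inj)
end
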